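/- arXiv:2203.05326 — 4 statements merged into one kernel-verified Lean document; each statement's English description precedes it below -/
import Mathlib

section
/- In the odd graph O_k there exists an arc coloring c : arcs → {0,…,k} such that (i) for every vertex u the map sending each neighbor v to c(u,v) is a bijection from the neighbors of u onto {0,…,k}, and (ii) for every edge uv, c(u,v) + c(v,u) = k. -/
namespace OddArcFact

open Fin.NatCast

variable {k : ℕ}

/-- Step function of the walk: `-1` on elements of `u`, `+1` elsewhere. -/
def eps (u : Finset (Fin (2*k+1))) (z : Fin (2*k+1)) : ℤ :=
  if z ∈ u then -1 else 1

/-- Global walk: partial sums of `eps` along positions `1, 2, …, m` (mod `2k+1`). -/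
def T (u : Finset (Fin (2*k+1))) (m : ℕ) : ℤ :=
  ∑ j ∈ Finset.range m, eps u ((j+1 : ℕ) : Fin (2*k+1))

/-- Local walk started at `x`. -/
def S (u : Finset (Fin (2*k+1))) (x : Fin (2*k+1)) (m : ℕ) : ℤ :=
  ∑ j ∈ Finset.range m, eps u (x + ((j+1 : ℕ) : Fin (2*k+1)))

/-- The arc count: number of up-steps of the walk around from `x` that start at
nonnegative height. -/
def f (u : Finset (Fin (2*k+1))) (x : Fin (2*k+1)) : ℕ :=
  ((Finset.range (2*k)).filter
    (fun i => (x + ((i+1 : ℕ) : Fin (2*k+1))) ∉ u ∧ 0 ≤ S u x i)).card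

/-- The hole of an edge: (sum of) the unique element outside `u ∪ v`. -/
def hole (u v : Finset (Fin (2*k+1))) : Fin (2*k+1) :=
  ∑ z ∈ (u ∪ v)ᶜ, z

/-- The arc coloring. -/
def c (u v : Finset (Fin (2*k+1))) : ℕ := f u (hole u v)

/-- Ranking key. -/
def kappa (u : Finset (Fin (2*k+1))) (y : Fin (2*k+1)) : ℤ :=
  (2*k+1 : ℤ) * (-(T u y.val)) + (y.val : ℤ)

lemma cast_pos_eq (x : Fin (2*k+1)) (i : ℕ) :
    ((x.val + i + 1 : ℕ) : Fin (2*k+1)) = x + ((i+1 : ℕ) : Fin (2*k+1)) := by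
  push_cast
  exact add_assoc _ _ _

lemma natCast_fin_inj {a b : ℕ} (hab : a ≤ b) (h : b < a + (2*k+1))
    (he : (a : Fin (2*k+1)) = (b : Fin (2*k+1))) : a = b := by
  have hv : a % (2*k+1) = b % (2*k+1) := by
    have := congrArg Fin.val he
    simpa [Fin.val_natCast] using this
  have hd : (2*k+1) ∣ b - a := (Nat.modEq_iff_dvd' hab).mp hv
  have hz : b - a = 0 := by
    by_contra hne
    have := Nat.le_of_dvd (Nat.pos_of_ne_zero hne) hd
    omega
  omega

lemma pos_ne (x : Fin (2*k+1)) {i : ℕ} (hi : i < 2*k) :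
    x + ((i+1 : ℕ) : Fin (2*k+1)) ≠ x := by
  intro h
  have h0 : ((i+1 : ℕ) : Fin (2*k+1)) = 0 := by
    have := congrArg (fun z => z - x) h
    simpa [add_comm, add_sub_cancel_right] using this
  have hv : ((i+1 : ℕ) : Fin (2*k+1)).val = i+1 := Fin.val_cast_of_lt (by omega)
  rw [h0] at hv
  simp at hv

lemma sum_eps_univ {u : Finset (Fin (2*k+1))} (hu : u.card = k) :
    ∑ z, eps u z = 1 := by
  classical
  rw [← Finset.sum_add_sum_compl u (eps u)]
  have h1 : ∑ z ∈ u, eps u z = -(k : ℤ) := by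
    rw [Finset.sum_congr rfl (fun z hz => show eps u z = -1 by simp [eps, hz])]
    simp [hu]
  have h2 : ∑ z ∈ uᶜ, eps u z = (k : ℤ) + 1 := by
    rw [Finset.sum_congr rfl (fun z hz => show eps u z = 1 by
      simp only [Finset.mem_compl] at hz
      simp [eps, hz])]
    have hc : uᶜ.card = k + 1 := by
      rw [Finset.card_compl, hu]
      simp only [Fintype.card_fin]
      omega
    simp [hc]
  rw [h1, h2]; ring

lemma T_succ (u : Finset (Fin (2*k+1))) (m : ℕ) :
    T u (m + 1) = T u m + eps u ((m+1 : ℕ) : Fin (2*k+1)) := by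
  rw [T, Finset.sum_range_succ, ← T]

lemma S_eq_T {u : Finset (Fin (2*k+1))} (x : Fin (2*k+1)) (m : ℕ) :
    S u x m = T u (x.val + m) - T u x.val := by
  induction m with
  | zero => simp [S]
  | succ m ih =>
    have h1 : x.val + (m+1) = (x.val + m) + 1 := by omega
    rw [S, Finset.sum_range_succ, ← S, ih, h1, T_succ, cast_pos_eq]
    ring

lemma T_full {u : Finset (Fin (2*k+1))} (hu : u.card = k) :
    T u (2*k+1) = 1 := by
  rw [T, ← sum_eps_univ hu]
  apply Finset.sum_bij (fun j _ => ((j + 1 : ℕ) : Fin (2*k+1)))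
  · intro a _; exact Finset.mem_univ _
  · intro a ha b hb he
    simp only [Finset.mem_range] at ha hb
    rcases le_or_gt a b with hab | hab
    · have := natCast_fin_inj (a := a+1) (b := b+1) (by omega) (by omega) he
      omega
    · have := natCast_fin_inj (a := b+1) (b := a+1) (by omega) (by omega) he.symm
      omega
  · intro z _
    rcases Nat.eq_zero_or_pos z.val with h0 | h0
    · refine ⟨2*k, Finset.mem_range.mpr (by omega), ?_⟩
      have : ((2*k+1 : ℕ) : Fin (2*k+1)) = 0 := by
        simp
      rw [this]
      exact (Fin.ext h0.symm : (0 : Fin (2*k+1)) = z)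
    · refine ⟨z.val - 1, Finset.mem_range.mpr (by have := z.isLt; omega), ?_⟩
      have hv : z.val - 1 + 1 = z.val := by omega
      rw [hv, Fin.cast_val_eq_self]
  · intro a _; rfl

lemma T_period {u : Finset (Fin (2*k+1))} (hu : u.card = k) (m : ℕ) :
    T u (m + (2*k+1)) = T u m + 1 := by
  induction m with
  | zero => simpa [show T u 0 = 0 by simp [T]] using T_full hu
  | succ m ih =>
    have hc : ((m + (2*k+1) + 1 : ℕ) : Fin (2*k+1)) = ((m + 1 : ℕ) : Fin (2*k+1)) := by
      have : (m + (2*k+1) + 1 : ℕ) = (m + 1) + (2*k+1) := by omega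
      rw [this, Nat.cast_add, Fin.natCast_self, add_zero]
    have : m + 1 + (2*k+1) = (m + (2*k+1)) + 1 := by omega
    rw [this, T_succ, ih, hc, T_succ]
    ring

lemma card_filter_succ (p : ℕ → Prop) [DecidablePred p] (m : ℕ) :
    ((Finset.range (m+1)).filter p).card
      = ((Finset.range m).filter p).card + (if p m then 1 else 0) := by
  rw [Finset.range_add_one, Finset.filter_insert]
  split
  · rw [Finset.card_insert_of_notMem
      (fun h => Finset.notMem_range_self (Finset.mem_filter.mp h).1)]
  · rw [add_zero]

lemma walk (u : Finset (Fin (2*k+1))) (x : Fin (2*k+1)) (m : ℕ) :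
    ((Finset.range m).filter
      (fun i => (x + ((i+1 : ℕ) : Fin (2*k+1))) ∉ u ∧ 0 ≤ S u x i)).card
    + ((Finset.range m).filter
      (fun i => (x + ((i+1 : ℕ) : Fin (2*k+1))) ∈ u ∧ S u x i ≤ 0)).card
    = ((Finset.range m).filter (fun i => (x + ((i+1 : ℕ) : Fin (2*k+1))) ∈ u)).card
      + (S u x m).toNat := by
  induction m with
  | zero => simp [S]
  | succ m ih =>
    have hS : S u x (m+1) = S u x m + eps u (x + ((m+1 : ℕ) : Fin (2*k+1))) := by
      rw [S, Finset.sum_range_succ, ← S]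
    rw [card_filter_succ, card_filter_succ, card_filter_succ, hS]
    by_cases hm : (x + ((m+1 : ℕ) : Fin (2*k+1))) ∈ u
    · have he : eps u (x + ((m+1 : ℕ) : Fin (2*k+1))) = -1 := by
        unfold eps; rw [if_pos hm]
      have hc1 : ¬((x + ((m+1 : ℕ) : Fin (2*k+1))) ∉ u ∧ 0 ≤ S u x m) :=
        fun h => h.1 hm
      rw [he, if_pos hm, if_neg hc1]
      by_cases hs : S u x m ≤ 0
      · rw [if_pos ⟨hm, hs⟩]; omega
      · have hc2 : ¬((x + ((m+1 : ℕ) : Fin (2*k+1))) ∈ u ∧ S u x m ≤ 0) :=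
          fun h => hs h.2
        rw [if_neg hc2]; omega
    · have he : eps u (x + ((m+1 : ℕ) : Fin (2*k+1))) = 1 := by
        unfold eps; rw [if_neg hm]
      have hc2 : ¬((x + ((m+1 : ℕ) : Fin (2*k+1))) ∈ u ∧ S u x m ≤ 0) :=
        fun h => hm h.1
      rw [he, if_neg hm, if_neg hc2]
      by_cases hs : 0 ≤ S u x m
      · rw [if_pos ⟨hm, hs⟩]; omega
      · have hc1 : ¬((x + ((m+1 : ℕ) : Fin (2*k+1))) ∉ u ∧ 0 ≤ S u x m) :=
          fun h => hs h.2
        rw [if_neg hc1]; omega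

lemma sub_val_pos {x z : Fin (2*k+1)} (hz : z ≠ x) :
    1 ≤ (z - x).val ∧ (z - x).val ≤ 2*k := by
  have h0 : (z - x) ≠ 0 := sub_ne_zero.mpr hz
  have h1 : (z - x).val ≠ 0 := fun h => h0 (Fin.ext (by simpa using h))
  have h2 := (z - x).isLt
  omega

lemma pos_retract {x z : Fin (2*k+1)} (hz : z ≠ x) :
    x + (((z - x).val - 1 + 1 : ℕ) : Fin (2*k+1)) = z := by
  have h1 := (sub_val_pos hz).1
  have : (z - x).val - 1 + 1 = (z - x).val := by omega
  rw [this, Fin.cast_val_eq_self]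
  abel

lemma card_filter_mem {u : Finset (Fin (2*k+1))} (hu : u.card = k) {x : Fin (2*k+1)}
    (hx : x ∉ u) :
    ((Finset.range (2*k)).filter
      (fun i => (x + ((i+1 : ℕ) : Fin (2*k+1))) ∈ u)).card = k := by
  have hb : ((Finset.range (2*k)).filter
      (fun i => (x + ((i+1 : ℕ) : Fin (2*k+1))) ∈ u)).card = u.card := by
    refine Finset.card_bij' (fun i _ => x + ((i+1 : ℕ) : Fin (2*k+1)))
      (fun z _ => (z - x).val - 1) ?_ ?_ ?_ ?_
    · intro a ha; exact (Finset.mem_filter.mp ha).2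
    · intro z hz
      have hzx : z ≠ x := fun h => hx (h ▸ hz)
      refine Finset.mem_filter.mpr ⟨Finset.mem_range.mpr ?_, ?_⟩
      · have := (sub_val_pos hzx).2
        omega
      · rw [pos_retract hzx]; exact hz
    · intro a ha
      have ha' := Finset.mem_range.mp (Finset.mem_filter.mp ha).1
      rw [add_sub_cancel_left, Fin.val_cast_of_lt (by omega)]
      omega
    · intro z hz
      have hzx : z ≠ x := fun h => hx (h ▸ hz)
      exact pos_retract hzx
  rw [hb, hu]

lemma S_full {u : Finset (Fin (2*k+1))} (hu : u.card = k) {x : Fin (2*k+1)}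
    (hx : x ∉ u) : S u x (2*k) = 0 := by
  have hbij : S u x (2*k) = ∑ z ∈ Finset.univ.erase x, eps u z := by
    rw [S]
    apply Finset.sum_bij' (fun i _ => x + ((i+1 : ℕ) : Fin (2*k+1)))
      (fun z _ => (z - x).val - 1)
    · intro a ha
      exact Finset.mem_erase.mpr ⟨pos_ne x (Finset.mem_range.mp ha), Finset.mem_univ _⟩
    · intro z hz
      have hzx : z ≠ x := (Finset.mem_erase.mp hz).1
      refine Finset.mem_range.mpr ?_
      have := (sub_val_pos hzx).2
      omega
    · intro a ha
      have ha' := Finset.mem_range.mp ha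
      rw [add_sub_cancel_left, Fin.val_cast_of_lt (by omega)]
      omega
    · intro z hz
      exact pos_retract (Finset.mem_erase.mp hz).1
    · intro a _; rfl
  have htot := sum_eps_univ hu
  rw [← Finset.add_sum_erase _ _ (Finset.mem_univ x)] at htot
  have hex : eps u x = 1 := by simp [eps, hx]
  rw [hbij]
  rw [hex] at htot
  omega

lemma compl_singleton {u v : Finset (Fin (2*k+1))} (hu : u.card = k) (hv : v.card = k)
    (hd : u ∩ v = ∅) : ∃ x, (u ∪ v)ᶜ = {x} := by
  apply Finset.card_eq_one.mp
  rw [Finset.card_compl, Finset.card_union_of_disjoint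
    (Finset.disjoint_iff_inter_eq_empty.mpr hd), hu, hv]
  simp only [Fintype.card_fin]
  omega

lemma suppl {u v : Finset (Fin (2*k+1))} (hu : u.card = k) (hv : v.card = k)
    (hd : u ∩ v = ∅) {x : Fin (2*k+1)} (hx : (u ∪ v)ᶜ = {x}) :
    f u x + f v x = k := by
  have hxuv : x ∉ u ∪ v := by
    rw [← Finset.mem_compl, hx]; exact Finset.mem_singleton_self x
  have hxu : x ∉ u := fun h => hxuv (Finset.mem_union_left _ h)
  have hxv : x ∉ v := fun h => hxuv (Finset.mem_union_right _ h)
  have hmem : ∀ z : Fin (2*k+1), z ≠ x → (z ∉ u ↔ z ∈ v) := by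
    intro z hz
    constructor
    · intro hzu
      by_contra hzv
      have : z ∈ (u ∪ v)ᶜ := by simp [hzu, hzv]
      rw [hx, Finset.mem_singleton] at this
      exact hz this
    · intro hzv hzu
      have : z ∈ u ∩ v := Finset.mem_inter.mpr ⟨hzu, hzv⟩
      rw [hd] at this
      exact absurd this (Finset.notMem_empty z)
  have hSneg : ∀ m, m ≤ 2*k → S v x m = - S u x m := by
    intro m hm
    rw [S, S, ← Finset.sum_neg_distrib]
    apply Finset.sum_congr rfl
    intro j hj
    have hj' := Finset.mem_range.mp hj
    have hne := pos_ne x (show j < 2*k by omega)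
    by_cases hzu : (x + ((j+1 : ℕ) : Fin (2*k+1))) ∈ u
    · have hzv : (x + ((j+1 : ℕ) : Fin (2*k+1))) ∉ v :=
        fun h => ((hmem _ hne).mpr h) hzu
      unfold eps
      rw [if_pos hzu, if_neg hzv]
      norm_num
    · have hzv := (hmem _ hne).mp hzu
      unfold eps
      rw [if_neg hzu, if_pos hzv]
  have hfv : f v x = ((Finset.range (2*k)).filter
      (fun i => (x + ((i+1 : ℕ) : Fin (2*k+1))) ∈ u ∧ S u x i ≤ 0)).card := by
    rw [f]
    congr 1
    apply Finset.filter_congr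
    intro i hi
    have hi' := Finset.mem_range.mp hi
    have hne := pos_ne x hi'
    rw [hSneg i (by omega)]
    constructor
    · rintro ⟨h1, h2⟩
      refine ⟨by_contra fun h => h1 ((hmem _ hne).mp h), by omega⟩
    · rintro ⟨h1, h2⟩
      exact ⟨fun h => ((hmem _ hne).mpr h) h1, by omega⟩
  have hw := walk u x (2*k)
  rw [S_full hu hxu, card_filter_mem hu hxu] at hw
  rw [f, hfv]
  omega

lemma val_add_sub {x z : Fin (2*k+1)} (hz : z ≠ x) :
    (x.val < z.val ∧ x.val + (z - x).val = z.val) ∨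
    (z.val < x.val ∧ x.val + (z - x).val = z.val + (2*k+1)) := by
  have h1 := sub_val_pos hz
  have hxz : x + (z - x) = z := by abel
  have hval := congrArg Fin.val hxz
  rw [Fin.val_add] at hval
  by_cases hlt : x.val + (z - x).val < 2*k+1
  · rw [Nat.mod_eq_of_lt hlt] at hval
    left
    omega
  · rw [Nat.mod_eq_sub_mod (by omega),
      Nat.mod_eq_of_lt (by have := x.isLt; omega)] at hval
    right
    have := x.isLt
    omega

lemma f_eq_rank {u : Finset (Fin (2*k+1))} (hu : u.card = k) {x : Fin (2*k+1)}
    (hx : x ∉ u) :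
    f u x = (uᶜ.filter (fun y => kappa u y < kappa u x)).card := by
  classical
  have h1 : f u x = ((Finset.range (2*k)).filter
      (fun i => (x + ((i+1 : ℕ) : Fin (2*k+1))) ∉ u ∧
        T u x.val < T u (x.val + i + 1))).card := by
    rw [f]
    congr 1
    apply Finset.filter_congr
    intro i hi
    have hi' := Finset.mem_range.mp hi
    constructor
    · rintro ⟨h2, h3⟩
      refine ⟨h2, ?_⟩
      rw [S_eq_T] at h3
      have hT := T_succ u (x.val + i)
      rw [cast_pos_eq] at hT
      have he : eps u (x + ((i+1 : ℕ) : Fin (2*k+1))) = 1 := by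
        unfold eps; rw [if_neg h2]
      rw [he] at hT
      omega
    · rintro ⟨h2, h3⟩
      refine ⟨h2, ?_⟩
      rw [S_eq_T]
      have hT := T_succ u (x.val + i)
      rw [cast_pos_eq] at hT
      have he : eps u (x + ((i+1 : ℕ) : Fin (2*k+1))) = 1 := by
        unfold eps; rw [if_neg h2]
      rw [he] at hT
      omega
  have h2 : ((Finset.range (2*k)).filter
      (fun i => (x + ((i+1 : ℕ) : Fin (2*k+1))) ∉ u ∧
        T u x.val < T u (x.val + i + 1))).card
      = (uᶜ.filter (fun y => (x.val < y.val ∧ T u x.val < T u y.val) ∨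
          (y.val < x.val ∧ T u x.val ≤ T u y.val))).card := by
    refine Finset.card_bij' (fun i _ => x + ((i+1 : ℕ) : Fin (2*k+1)))
      (fun z _ => (z - x).val - 1) ?_ ?_ ?_ ?_
    · intro i hi
      obtain ⟨hir, hnu, hT⟩ := Finset.mem_filter.mp hi
      have hi' := Finset.mem_range.mp hir
      refine Finset.mem_filter.mpr ⟨Finset.mem_compl.mpr hnu, ?_⟩
      have hvadd : (x + ((i+1 : ℕ) : Fin (2*k+1))).val = (x.val + (i+1)) % (2*k+1) := by
        rw [Fin.val_add, Fin.val_cast_of_lt (show i+1 < 2*k+1 by omega)]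
      by_cases hlt : x.val + (i+1) < 2*k+1
      · left
        have hv : (x + ((i+1 : ℕ) : Fin (2*k+1))).val = x.val + (i+1) := by
          rw [hvadd, Nat.mod_eq_of_lt hlt]
        constructor
        · omega
        · rw [hv]
          exact hT
      · right
        have hv : (x + ((i+1 : ℕ) : Fin (2*k+1))).val = x.val + (i+1) - (2*k+1) := by
          rw [hvadd, Nat.mod_eq_sub_mod (by omega),
            Nat.mod_eq_of_lt (by have := x.isLt; omega)]
        constructor
        · have := x.isLt; omega
        · have hper := T_period hu ((x + ((i+1 : ℕ) : Fin (2*k+1))).val)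
          have harg : (x + ((i+1 : ℕ) : Fin (2*k+1))).val + (2*k+1) = x.val + i + 1 := by
            omega
          rw [harg] at hper
          omega
    · intro z hz
      obtain ⟨hzc, hR⟩ := Finset.mem_filter.mp hz
      have hzx : z ≠ x := by
        intro h
        subst h
        rcases hR with ⟨h, _⟩ | ⟨h, _⟩ <;> omega
      refine Finset.mem_filter.mpr ⟨Finset.mem_range.mpr ?_, ?_, ?_⟩
      · have := (sub_val_pos hzx).2
        omega
      · rw [pos_retract hzx]
        exact Finset.mem_compl.mp hzc
      · have h1' := (sub_val_pos hzx).1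
        have harg : x.val + ((z - x).val - 1) + 1 = x.val + (z - x).val := by omega
        rw [harg]
        rcases val_add_sub hzx with ⟨hlt, heq⟩ | ⟨hlt, heq⟩
        · rw [heq]
          rcases hR with ⟨_, h⟩ | ⟨h, _⟩
          · exact h
          · omega
        · rw [heq, T_period hu]
          rcases hR with ⟨h, _⟩ | ⟨_, h⟩
          · omega
          · omega
    · intro i hi
      have hi' := Finset.mem_range.mp (Finset.mem_filter.mp hi).1
      rw [add_sub_cancel_left, Fin.val_cast_of_lt (by omega)]
      omega
    · intro z hz
      obtain ⟨hzc, hR⟩ := Finset.mem_filter.mp hz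
      have hzx : z ≠ x := by
        intro h
        subst h
        rcases hR with ⟨h, _⟩ | ⟨h, _⟩ <;> omega
      exact pos_retract hzx
  have h3 : uᶜ.filter (fun y => (x.val < y.val ∧ T u x.val < T u y.val) ∨
          (y.val < x.val ∧ T u x.val ≤ T u y.val))
      = uᶜ.filter (fun y => kappa u y < kappa u x) := by
    apply Finset.filter_congr
    intro y _
    unfold kappa
    have hyv : (y.val : ℤ) < 2*k+1 := by exact_mod_cast y.isLt
    have hxv : (x.val : ℤ) < 2*k+1 := by exact_mod_cast x.isLt
    have hy0 : (0 : ℤ) ≤ (y.val : ℤ) := by positivity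
    have hx0 : (0 : ℤ) ≤ (x.val : ℤ) := by positivity
    constructor
    · intro h
      have hcase : T u x.val < T u y.val ∨ (T u x.val = T u y.val ∧ y.val < x.val) := by
        rcases h with ⟨h1', h2'⟩ | ⟨h1', h2'⟩
        · exact Or.inl h2'
        · rcases eq_or_lt_of_le h2' with he | hlt
          · exact Or.inr ⟨he, h1'⟩
          · exact Or.inl hlt
      rcases hcase with hlt | ⟨he, hvlt⟩
      · have hd : T u x.val - T u y.val ≤ -1 := by omega
        have hmul : (2*k+1 : ℤ) * (T u x.val - T u y.val) ≤ (2*k+1 : ℤ) * (-1) :=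
          mul_le_mul_of_nonneg_left hd (by positivity)
        nlinarith [hmul]
      · rw [← he]
        have : (y.val : ℤ) < (x.val : ℤ) := by exact_mod_cast hvlt
        linarith
    · intro h
      rcases lt_trichotomy (T u x.val) (T u y.val) with hlt | he | hgt
      · rcases lt_trichotomy y.val x.val with hv | hv | hv
        · exact Or.inr ⟨hv, le_of_lt hlt⟩
        · exfalso
          have hyx : y = x := Fin.ext hv
          rw [hyx] at hlt
          exact lt_irrefl _ hlt
        · exact Or.inl ⟨hv, hlt⟩
      · right
        rw [← he] at h
        constructor
        · have : (y.val : ℤ) < (x.val : ℤ) := by linarith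
          exact_mod_cast this
        · omega
      · exfalso
        have hd : T u y.val - T u x.val ≤ -1 := by omega
        have hmul : (2*k+1 : ℤ) * (T u y.val - T u x.val) ≤ (2*k+1 : ℤ) * (-1) :=
          mul_le_mul_of_nonneg_left hd (by positivity)
        nlinarith [hmul]
  rw [h1, h2, h3]

lemma kappa_injOn (u : Finset (Fin (2*k+1))) : Set.InjOn (kappa u) ↑(uᶜ) := by
  intro y _ z _ h
  unfold kappa at h
  have hyv : (y.val : ℤ) < 2*k+1 := by exact_mod_cast y.isLt
  have hzv : (z.val : ℤ) < 2*k+1 := by exact_mod_cast z.isLt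
  have hy0 : (0 : ℤ) ≤ (y.val : ℤ) := by positivity
  have hz0 : (0 : ℤ) ≤ (z.val : ℤ) := by positivity
  rcases lt_trichotomy (T u y.val) (T u z.val) with hlt | he | hgt
  · exfalso
    have hd : T u y.val - T u z.val ≤ -1 := by omega
    have hmul : (2*k+1 : ℤ) * (T u y.val - T u z.val) ≤ (2*k+1 : ℤ) * (-1) :=
      mul_le_mul_of_nonneg_left hd (by positivity)
    nlinarith [hmul]
  · rw [he] at h
    have : (y.val : ℤ) = (z.val : ℤ) := by linarith
    exact Fin.ext (by exact_mod_cast this)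
  · exfalso
    have hd : T u z.val - T u y.val ≤ -1 := by omega
    have hmul : (2*k+1 : ℤ) * (T u z.val - T u y.val) ≤ (2*k+1 : ℤ) * (-1) :=
      mul_le_mul_of_nonneg_left hd (by positivity)
    nlinarith [hmul]

lemma rank_bijOn {α : Type*} [DecidableEq α] (s : Finset α) (g : α → ℤ)
    (hg : Set.InjOn g ↑s) :
    Set.BijOn (fun a => (s.filter (fun y => g y < g a)).card) ↑s (Set.Iio s.card) := by
  have hmaps : Set.MapsTo (fun a => (s.filter (fun y => g y < g a)).card) ↑s
      (Set.Iio s.card) := by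
    intro a ha
    simp only [Set.mem_Iio]
    have has : a ∈ s := ha
    have hsub : s.filter (fun y => g y < g a) ⊆ s.erase a := by
      intro y hy
      obtain ⟨hys, hlt⟩ := Finset.mem_filter.mp hy
      refine Finset.mem_erase.mpr ⟨?_, hys⟩
      intro hcon
      rw [hcon] at hlt
      exact lt_irrefl _ hlt
    have hle := Finset.card_le_card hsub
    have hcard := Finset.card_erase_of_mem has
    have hpos : 0 < s.card := Finset.card_pos.mpr ⟨a, has⟩
    omega
  have hkey : ∀ a ∈ s, ∀ b ∈ s, g a < g b →
      (s.filter (fun y => g y < g a)).card < (s.filter (fun y => g y < g b)).card := by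
    intro a ha b hb hab
    apply Finset.card_lt_card
    rw [Finset.ssubset_def]
    constructor
    · intro y hy
      obtain ⟨hys, hlt⟩ := Finset.mem_filter.mp hy
      exact Finset.mem_filter.mpr ⟨hys, lt_trans hlt hab⟩
    · intro hsub
      have : a ∈ s.filter (fun y => g y < g a) :=
        hsub (Finset.mem_filter.mpr ⟨ha, hab⟩)
      exact absurd (Finset.mem_filter.mp this).2 (lt_irrefl _)
  have hinj : Set.InjOn (fun a => (s.filter (fun y => g y < g a)).card) ↑s := by
    intro a ha b hb h
    by_contra hne
    have hgne : g a ≠ g b := fun he => hne (hg ha hb he)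
    rcases lt_or_gt_of_ne hgne with hlt | hgt
    · exact absurd h (Nat.ne_of_lt (hkey a ha b hb hlt))
    · exact absurd h.symm (Nat.ne_of_lt (hkey b hb a ha hgt))
  refine ⟨hmaps, hinj, ?_⟩
  intro b hb
  simp only [Set.mem_Iio] at hb
  have himg : s.image (fun a => (s.filter (fun y => g y < g a)).card)
      = Finset.range s.card := by
    apply Finset.eq_of_subset_of_card_le
    · intro m hm
      obtain ⟨a, ha, rfl⟩ := Finset.mem_image.mp hm
      exact Finset.mem_range.mpr (Set.mem_Iio.mp (hmaps ha))
    · rw [Finset.card_range, Finset.card_image_of_injOn hinj]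
  have hbm : b ∈ Finset.range s.card := Finset.mem_range.mpr hb
  rw [← himg] at hbm
  obtain ⟨a, ha, he⟩ := Finset.mem_image.mp hbm
  exact ⟨a, ha, he⟩

lemma card_compl_eq {u : Finset (Fin (2*k+1))} (hu : u.card = k) :
    (uᶜ).card = k + 1 := by
  rw [Finset.card_compl, hu]
  simp only [Fintype.card_fin]
  omega

lemma f_bijOn {u : Finset (Fin (2*k+1))} (hu : u.card = k) :
    Set.BijOn (f u) ↑(uᶜ) (Set.Iic k) := by
  have h := rank_bijOn uᶜ (kappa u) (kappa_injOn u)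
  rw [card_compl_eq hu] at h
  have hIic : Set.Iio (k+1) = Set.Iic k := by
    ext m
    simp [Nat.lt_succ_iff]
  rw [hIic] at h
  apply Set.BijOn.congr h
  intro y hy
  have hyu : y ∉ u := Finset.mem_compl.mp hy
  exact (f_eq_rank hu hyu).symm

end OddArcFact

/-- Edge-supplementary 1-arc factorization of the odd graph `O_k`: there exists an arc
coloring `c` with colors in `{0, …, k}` such that (i) for every vertex `u` (a `k`-subset
of `Z_{2k+1}`), the map `v ↦ c u v` is a bijection from the neighbors of `u` (the
`k`-subsets disjoint from `u`) onto `{0, …, k}`, and (ii) for every edge `uv`,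
`c u v + c v u = k`. -/
theorem odd_graph_arc_factorization (k : ℕ) (hk : 1 ≤ k) :
    ∃ c : Finset (Fin (2 * k + 1)) → Finset (Fin (2 * k + 1)) → ℕ,
      (∀ u : Finset (Fin (2 * k + 1)), u.card = k →
        Set.BijOn (fun v => c u v) {v | v.card = k ∧ u ∩ v = ∅} (Set.Iic k)) ∧
      (∀ u v : Finset (Fin (2 * k + 1)), u.card = k → v.card = k → u ∩ v = ∅ →
        c u v + c v u = k) := by
  classical
  refine ⟨fun u v => OddArcFact.c u v, ?_, ?_⟩
  · -- bijectivity at each vertex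
    intro u hu
    have hbij := OddArcFact.f_bijOn hu
    have hmap1 : Set.MapsTo (fun v => OddArcFact.hole u v)
        {v | v.card = k ∧ u ∩ v = ∅} ↑(uᶜ) := by
      intro v hv
      obtain ⟨hvc, hdis⟩ := hv
      obtain ⟨x, hx⟩ := OddArcFact.compl_singleton hu hvc hdis
      have hh : OddArcFact.hole u v = x := by
        rw [OddArcFact.hole, hx, Finset.sum_singleton]
      have hxuv : x ∉ u ∪ v := by
        rw [← Finset.mem_compl, hx]; exact Finset.mem_singleton_self x
      have : OddArcFact.hole u v ∈ uᶜ := by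
        rw [hh]
        exact Finset.mem_compl.mpr (fun h => hxuv (Finset.mem_union_left _ h))
      exact this
    have hmap2 : Set.MapsTo (fun x => uᶜ.erase x) ↑(uᶜ)
        {v | v.card = k ∧ u ∩ v = ∅} := by
      intro x hx
      have hxc : x ∈ uᶜ := hx
      refine ⟨?_, ?_⟩
      · rw [Finset.card_erase_of_mem hxc, OddArcFact.card_compl_eq hu]
        omega
      · apply Finset.eq_empty_iff_forall_notMem.mpr
        intro z hz
        obtain ⟨hzu, hze⟩ := Finset.mem_inter.mp hz
        exact (Finset.mem_compl.mp (Finset.mem_erase.mp hze).2) hzu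
    have hinv : Set.InvOn (fun x => uᶜ.erase x) (fun v => OddArcFact.hole u v)
        {v | v.card = k ∧ u ∩ v = ∅} ↑(uᶜ) := by
      constructor
      · intro v hv
        obtain ⟨hvc, hdis⟩ := hv
        obtain ⟨x, hx⟩ := OddArcFact.compl_singleton hu hvc hdis
        have hh : OddArcFact.hole u v = x := by
          rw [OddArcFact.hole, hx, Finset.sum_singleton]
        have hxuv : x ∉ u ∪ v := by
          rw [← Finset.mem_compl, hx]; exact Finset.mem_singleton_self x
        show uᶜ.erase (OddArcFact.hole u v) = v
        rw [hh]
        ext z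
        simp only [Finset.mem_erase, Finset.mem_compl]
        constructor
        · rintro ⟨hzx, hzu⟩
          by_contra hzv
          have hzc : z ∈ (u ∪ v)ᶜ := by simp [hzu, hzv]
          rw [hx, Finset.mem_singleton] at hzc
          exact hzx hzc
        · intro hzv
          refine ⟨?_, ?_⟩
          · intro h
            exact hxuv (Finset.mem_union_right _ (h ▸ hzv))
          · intro hzu
            have : z ∈ u ∩ v := Finset.mem_inter.mpr ⟨hzu, hzv⟩
            rw [hdis] at this
            exact absurd this (Finset.notMem_empty z)
      · intro x hx
        have hxc : x ∈ uᶜ := hx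
        have hxu : x ∉ u := Finset.mem_compl.mp hxc
        have hcc : (u ∪ uᶜ.erase x)ᶜ = {x} := by
          ext z
          simp only [Finset.mem_compl, Finset.mem_union, Finset.mem_erase,
            Finset.mem_singleton]
          constructor
          · intro h
            push_neg at h
            obtain ⟨hzu, h2⟩ := h
            by_contra hzx
            exact hzu (h2 hzx)
          · intro h
            subst h
            push_neg
            exact ⟨hxu, fun hc => absurd rfl hc⟩
        show OddArcFact.hole u (uᶜ.erase x) = x
        rw [OddArcFact.hole, hcc, Finset.sum_singleton]
    have hhole := hinv.bijOn hmap1 hmap2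
    exact hbij.comp hhole
  · -- supplementarity
    intro u v hu hv hd
    obtain ⟨x, hx⟩ := OddArcFact.compl_singleton hu hv hd
    have h1 : OddArcFact.c u v = OddArcFact.f u x := by
      rw [OddArcFact.c, OddArcFact.hole, hx, Finset.sum_singleton]
    have h2 : OddArcFact.c v u = OddArcFact.f v x := by
      rw [OddArcFact.c, OddArcFact.hole, Finset.union_comm, hx, Finset.sum_singleton]
    show OddArcFact.c u v + OddArcFact.c v u = k
    rw [h1, h2]
    exact OddArcFact.suppl hu hv hd hx
end

section
/- The number of k-germs equals the Catalan number C_k: the number of strings a_{k-1} a_{k-2} ⋯ a_1 of length k-1 with a_{k-1} ∈ {0,1} and 0 ≤ a_{i-1} ≤ a_i + 1 for 1 < i < k is C_k. -/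
open Finset

/-- A `k`-germ is a string `a_{k-1} ⋯ a_1` of `k-1` nonnegative integers with
`a_{k-1} ∈ {0,1}` and `a_{i-1} ≤ a_i + 1`. Here we index by `Fin (k-1)`, with
`a j` denoting `a_{j+1}` (so position `k-2` holds `a_{k-1}` and position `0` holds `a_1`). -/
def IsGerm (k : ℕ) (a : Fin (k - 1) → ℕ) : Prop :=
  (∀ j : Fin (k - 1), j.val = k - 2 → a j ≤ 1) ∧
  (∀ (j : Fin (k - 1)) (hj : j.val + 1 < k - 1), a j ≤ a ⟨j.val + 1, hj⟩ + 1)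

/-- Auxiliary predicate: sequences of length `n` with top value `≤ m`. -/
def Q (n m : ℕ) (a : Fin n → ℕ) : Prop :=
  (∀ j : Fin n, j.val = n - 1 → a j ≤ m) ∧
  (∀ (j : Fin n) (hj : j.val + 1 < n), a j ≤ a ⟨j.val + 1, hj⟩ + 1)

/-- Ballot-type counting function. -/
def g : ℕ → ℕ → ℕ
  | 0, _ => 1
  | n + 1, m => ∑ j ∈ Finset.range (m + 1), g n (j + 1)

def topVal {n m : ℕ} (x : {a : Fin (n + 1) → ℕ // Q (n + 1) m a}) : Fin (m + 1) :=
  ⟨x.1 (Fin.last n), Nat.lt_succ_of_le (x.2.1 (Fin.last n) (by simp))⟩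

def fiberEquiv (n m : ℕ) (j : Fin (m + 1)) :
    {x : {a : Fin (n + 1) → ℕ // Q (n + 1) m a} // topVal x = j} ≃
      {b : Fin n → ℕ // Q n (j.val + 1) b} where
  toFun x := ⟨Fin.init x.1.1, by
    obtain ⟨⟨a, ha⟩, hx⟩ := x
    have htop : a (Fin.last n) = j.val := congrArg Fin.val hx
    constructor
    · intro i hi
      have hcond : i.castSucc.val + 1 < n + 1 := by
        have := i.isLt; simp only [Fin.coe_castSucc]; omega
      have h3 := ha.2 i.castSucc hcond
      have h4 : (⟨i.castSucc.val + 1, hcond⟩ : Fin (n + 1)) = Fin.last n := by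
        have := i.isLt
        apply Fin.ext
        simp only [Fin.coe_castSucc, Fin.val_last]
        omega
      rw [h4, htop] at h3
      exact h3
    · intro i hij
      have hcond : i.castSucc.val + 1 < n + 1 := by
        simp only [Fin.coe_castSucc]; omega
      have h3 := ha.2 i.castSucc hcond
      have h4 : (⟨i.castSucc.val + 1, hcond⟩ : Fin (n + 1)) =
          (⟨i.val + 1, hij⟩ : Fin n).castSucc := by
        apply Fin.ext; simp
      rw [h4] at h3
      exact h3⟩
  invFun b := ⟨⟨Fin.snoc b.1 j.val, by
    constructor
    · intro i hi
      have hlast : i = Fin.last n := by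
        apply Fin.ext; simp only [Fin.val_last]; omega
      rw [hlast, Fin.snoc_last]
      have := j.isLt; omega
    · intro i hij
      have hv : i.val < n := by omega
      have e1 : (Fin.snoc b.1 (j.val : ℕ) : Fin (n + 1) → ℕ) i = b.1 ⟨i.val, hv⟩ := by
        conv_lhs => rw [show i = Fin.castSucc ⟨i.val, hv⟩ from Fin.ext (by simp)]
        exact Fin.snoc_castSucc _ _ _
      rcases Nat.lt_or_ge (i.val + 1) n with h | h
      · have e2 : (Fin.snoc b.1 (j.val : ℕ) : Fin (n + 1) → ℕ) ⟨i.val + 1, hij⟩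
            = b.1 ⟨i.val + 1, h⟩ := by
          rw [show (⟨i.val + 1, hij⟩ : Fin (n + 1)) = Fin.castSucc ⟨i.val + 1, h⟩ from
            Fin.ext (by simp)]
          exact Fin.snoc_castSucc _ _ _
        rw [e1, e2]
        exact b.2.2 ⟨i.val, hv⟩ h
      · have e2 : (⟨i.val + 1, hij⟩ : Fin (n + 1)) = Fin.last n := by
          apply Fin.ext; simp only [Fin.val_last]; omega
        rw [e1, e2, Fin.snoc_last]
        exact b.2.1 ⟨i.val, hv⟩ (by show i.val = n - 1; omega)⟩,
    Fin.ext (by simp [topVal])⟩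
  left_inv x := by
    apply Subtype.ext
    apply Subtype.ext
    have htop : x.1.1 (Fin.last n) = j.val := congrArg Fin.val x.2
    show Fin.snoc (α := fun _ : Fin (n + 1) => ℕ) (Fin.init x.1.1) j.val = x.1.1
    rw [← htop, Fin.snoc_init_self]
  right_inv b := by
    apply Subtype.ext
    show Fin.init (Fin.snoc (α := fun _ : Fin (n + 1) => ℕ) b.1 j.val) = b.1
    exact Fin.init_snoc _ _

noncomputable def stepEquiv (n m : ℕ) :
    {a : Fin (n + 1) → ℕ // Q (n + 1) m a} ≃
      Σ j : Fin (m + 1), {b : Fin n → ℕ // Q n (j.val + 1) b} :=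
  (Equiv.sigmaFiberEquiv (topVal (n := n) (m := m))).symm.trans
    (Equiv.sigmaCongrRight fun j => fiberEquiv n m j)

lemma key (n : ℕ) : ∀ m, Nonempty ({a : Fin n → ℕ // Q n m a} ≃ Fin (g n m)) := by
  induction n with
  | zero =>
    intro m
    have hall : ∀ a : Fin 0 → ℕ, Q 0 m a := fun a => ⟨fun j _ => j.elim0, fun j _ => j.elim0⟩
    exact ⟨(Equiv.subtypeUnivEquiv hall).trans
      ((Equiv.ofUnique (Fin 0 → ℕ) (Fin 1)).trans (finCongr (by simp [g])))⟩
  | succ n ih =>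
    intro m
    have e2 : (Σ j : Fin (m + 1), {b : Fin n → ℕ // Q n (j.val + 1) b}) ≃
        Σ j : Fin (m + 1), Fin (g n (j.val + 1)) :=
      Equiv.sigmaCongrRight fun j => (ih (j.val + 1)).some
    have hcard : Fintype.card (Σ j : Fin (m + 1), Fin (g n (j.val + 1))) = g (n + 1) m := by
      rw [Fintype.card_sigma]
      simp only [Fintype.card_fin]
      rw [Fin.sum_univ_eq_sum_range (fun j => g n (j + 1))]
      rfl
    exact ⟨((stepEquiv n m).trans e2).trans ((Fintype.equivFin _).trans (finCongr hcard))⟩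

lemma card_Q (n m : ℕ) : Nat.card {a : Fin n → ℕ // Q n m a} = g n m := by
  obtain ⟨e⟩ := key n m
  rw [Nat.card_congr e, Nat.card_eq_fintype_card, Fintype.card_fin]

lemma gAB : ∀ n : ℕ, g n 0 = catalan n ∧
    ∀ m, g n (m + 1) = ∑ i ∈ Finset.range (n + 1), catalan i * g (n - i) m := by
  intro n
  induction n using Nat.strong_induction_on with
  | _ n ih =>
    match n with
    | 0 =>
      refine ⟨by simp [g], fun m => by simp [g]⟩
    | n + 1 =>
      have ihn := ih n (Nat.lt_succ_self n)
      have hcat : catalan (n + 1) = ∑ i ∈ Finset.range (n + 1), catalan i * catalan (n - i) := by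
        rw [catalan_succ n]
        exact Fin.sum_univ_eq_sum_range (fun i => catalan i * catalan (n - i)) (n + 1)
      have hc : ∀ i ∈ Finset.range (n + 1), catalan i * g (n - i) 0
          = catalan i * catalan (n - i) := by
        intro i hi
        rw [(ih (n - i) (by omega)).1]
      have hA : g (n + 1) 0 = catalan (n + 1) := by
        have h1 : g (n + 1) 0 = g n 1 := by simp [g]
        rw [h1, ihn.2 0]
        exact (Finset.sum_congr rfl hc).trans hcat.symm
      refine ⟨hA, fun m => ?_⟩
      have h1 : g (n + 1) (m + 1) = ∑ j ∈ Finset.range (m + 2), g n (j + 1) := rfl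
      rw [h1]
      have h2 : ∀ j ∈ Finset.range (m + 2), g n (j + 1)
          = ∑ i ∈ Finset.range (n + 1), catalan i * g (n - i) j :=
        fun j _ => ihn.2 j
      rw [Finset.sum_congr rfl h2, Finset.sum_comm]
      have h3 : ∀ i ∈ Finset.range (n + 1), ∑ j ∈ Finset.range (m + 2), catalan i * g (n - i) j
          = catalan i * catalan (n - i) + catalan i * g (n + 1 - i) m := by
        intro i hi
        have hiLe : i ≤ n := by simp at hi; omega
        rw [← Finset.mul_sum, Finset.sum_range_succ']
        have hA' : g (n - i) 0 = catalan (n - i) := (ih (n - i) (by omega)).1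
        have hg : ∑ j ∈ Finset.range (m + 1), g (n - i) (j + 1) = g (n - i + 1) m := rfl
        rw [hg, hA', show n - i + 1 = n + 1 - i by omega, mul_add]
        ring
      rw [Finset.sum_congr rfl h3, Finset.sum_add_distrib, ← hcat]
      rw [Finset.sum_range_succ (fun i => catalan i * g (n + 1 - i) m) (n + 1)]
      rw [show n + 1 - (n + 1) = 0 from by omega]
      simp only [g]
      ring

/-- The number of `k`-germs equals the Catalan number `C_k = choose (2k) k / (k+1)`. -/
theorem card_germs_eq_catalan (k : ℕ) (hk : 1 ≤ k) :
    Nat.card {a : Fin (k - 1) → ℕ // IsGerm k a} = Nat.choose (2 * k) k / (k + 1) := by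
  have hQ : ∀ a : Fin (k - 1) → ℕ, IsGerm k a ↔ Q (k - 1) 1 a := by
    intro a
    constructor <;> rintro ⟨h1, h2⟩ <;> exact ⟨fun j hj => h1 j (by omega), h2⟩
  rw [Nat.card_congr (Equiv.subtypeEquivRight hQ), card_Q]
  have h2 : g (k - 1) 1 = catalan k := by
    obtain ⟨n, rfl⟩ : ∃ n, k = n + 1 := ⟨k - 1, by omega⟩
    simp only [Nat.add_sub_cancel]
    rw [(gAB n).2 0]
    have hc : ∀ i ∈ Finset.range (n + 1), catalan i * g (n - i) 0
        = catalan i * catalan (n - i) := by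
      intro i hi
      rw [(gAB (n - i)).1]
    rw [Finset.sum_congr rfl hc, catalan_succ n,
      ← Fin.sum_univ_eq_sum_range (fun i => catalan i * catalan (n - i)) (n + 1)]
  rw [h2, catalan_eq_centralBinom_div]
  rfl
end

section
/- There is an explicit bijection between k-germs and Dyck words of length 2k. -/
/-- A Dyck word: a binary string (`false` = 0, `true` = 1) with equally many zeros and
ones whose every prefix has at least as many zeros as ones. -/
def IsDyck (w : List Bool) : Prop :=
  w.count true = w.count false ∧ ∀ p : List Bool, p <+: w → p.count true ≤ p.count false

namespace GermDyckAux

open List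

/-- A "germ list": sequence starting with 0 whose steps increase by at most 1. -/
def GermList (l : List ℕ) : Prop :=
  l.Chain' (fun x y => y ≤ x + 1) ∧ ∀ h ∈ l.head?, h = 0

theorem germList_nil : GermList [] := ⟨List.isChain_nil, by simp⟩

/-- Turn a binary tree into a germ list. -/
def ofTree : Tree Unit → List ℕ
  | BinaryTree.nil => []
  | BinaryTree.node _ l r => 0 :: ((ofTree l).map (· + 1) ++ ofTree r)

/-- Turn a germ list into a binary tree. -/
def toTree : List ℕ → Tree Unit
  | [] => BinaryTree.nil
  | _ :: rest =>
    BinaryTree.node () (toTree ((rest.takeWhile (· != 0)).map (· - 1)))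
      (toTree (rest.dropWhile (· != 0)))
  termination_by l => l.length
  decreasing_by
  · have := (rest.takeWhile_sublist (· != 0)).length_le
    simp only [length_map, length_cons]; omega
  · have := (rest.dropWhile_sublist (· != 0)).length_le
    simp only [length_cons]; omega

theorem length_ofTree (t : Tree Unit) : (ofTree t).length = t.numNodes := by
  induction t with
  | nil => rfl
  | node _ l r ihl ihr =>
    simp only [ofTree, BinaryTree.numNodes, length_cons, length_append, length_map, ihl, ihr]

theorem numNodes_toTree (l : List ℕ) : (toTree l).numNodes = l.length := by
  induction l using toTree.induct with
  | case1 => simp [toTree]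
  | case2 x rest ih1 ih2 =>
    have h := congrArg length (rest.takeWhile_append_dropWhile (p := (· != 0)))
    rw [length_append] at h
    rw [toTree]
    simp only [BinaryTree.numNodes, ih1, ih2, length_map, length_cons]
    omega

theorem germList_ofTree (t : Tree Unit) : GermList (ofTree t) := by
  induction t with
  | nil => exact germList_nil
  | node _ l r ihl ihr =>
    obtain ⟨cl, hl⟩ := ihl
    obtain ⟨cr, hr⟩ := ihr
    constructor
    · show List.IsChain _ _
      rw [ofTree, List.isChain_cons, List.isChain_append]
      refine ⟨?_, ?_, cr, ?_⟩
      · rcases hA : (ofTree l) with _ | ⟨c, tl⟩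
        · simp only [hA, map_nil, nil_append]
          intro y hy; have := hr y hy; omega
        · have hc : c = 0 := hl c (by simp [hA])
          simp only [hA, hc, map_cons, cons_append, head?_cons, Option.mem_some_iff]
          intro y hy; omega
      · exact List.isChain_map_of_isChain _ (fun a b hab => by omega) cl
      · intro x _ y hy
        have := hr y hy; omega
    · intro h hh
      simp [ofTree] at hh
      omega

theorem split_tw (A B : List ℕ) (hA : ∀ x ∈ A, x ≠ 0) (hB : ∀ h ∈ B.head?, h = 0) :
    (A ++ B).takeWhile (· != 0) = A ∧ (A ++ B).dropWhile (· != 0) = B := by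
  induction A with
  | nil =>
    simp only [nil_append]
    cases B with
    | nil => simp
    | cons b B' =>
      have hb : b = 0 := hB b (by simp)
      subst hb
      simp [takeWhile_cons, dropWhile_cons]
  | cons a A' ih =>
    have ha : a ≠ 0 := hA a (by simp)
    obtain ⟨h1, h2⟩ := ih (fun x hx => hA x (by simp [hx]))
    simp [takeWhile_cons, dropWhile_cons, ha, h1, h2]

theorem toTree_ofTree (t : Tree Unit) : toTree (ofTree t) = t := by
  induction t with
  | nil => simp [ofTree, toTree]
  | node u l r ihl ihr =>
    obtain ⟨h1, h2⟩ := split_tw ((ofTree l).map (· + 1)) (ofTree r)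
      (by intro x hx; simp at hx; omega) (germList_ofTree r).2
    rw [ofTree, toTree, h1, h2]
    have : ((ofTree l).map (· + 1)).map (· - 1) = ofTree l := by
      simp [map_map, Function.comp_def]
    rw [this, ihl, ihr]

theorem head_le_one_of_germ {y : ℕ} {rest : List ℕ} (hc : List.Chain' (fun x y => y ≤ x + 1) (0 :: y :: rest)) :
    y ≤ 1 := by
  change List.IsChain _ _ at hc
  rw [List.isChain_cons_cons] at hc
  simpa using hc.1

theorem ofTree_toTree : ∀ (n : ℕ) (l : List ℕ), l.length ≤ n → GermList l →
    ofTree (toTree l) = l := by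
  intro n
  induction n with
  | zero =>
    intro l hl _
    rw [List.length_eq_zero_iff.mp (Nat.le_zero.mp hl)]
    simp [toTree, ofTree]
  | succ n ih =>
    intro l hl hg
    rcases l with _ | ⟨x, rest⟩
    · simp [toTree, ofTree]
    have hx : x = 0 := hg.2 x (by simp)
    subst hx
    have hl' : rest.length ≤ n := by simp at hl; omega
    set T := rest.takeWhile (· != 0) with hT
    set B := rest.dropWhile (· != 0) with hB
    have hTB : T ++ B = rest := by rw [hT, hB]; exact takeWhile_append_dropWhile ..
    have hTmem : ∀ x ∈ T, x ≠ 0 := by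
      intro x hx
      have := List.mem_takeWhile_imp hx
      simpa using this
    have hchain : rest.Chain' (fun x y => y ≤ x + 1) := hg.1.tail
    have hBhead : ∀ h ∈ B.head?, h = 0 := by
      have hd := List.head?_dropWhile_not (· != 0) rest
      intro h hh
      rw [Option.mem_def, hB] at hh
      rw [hh] at hd
      simpa using hd
    have hgT : GermList (T.map (· - 1)) := by
      constructor
      · show List.IsChain _ _
        rw [List.isChain_map]
        exact (hchain.prefix (rest.takeWhile_prefix _)).imp (fun a b hab => by omega)
      · intro h hh
        rcases rest with _ | ⟨y, rest'⟩
        · simp [hT] at hh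
        · have hy1 : y ≤ 1 := head_le_one_of_germ hg.1
          rw [hT, takeWhile_cons] at hh
          by_cases hy : y = 0
          · simp [hy] at hh
          · have hy' : y = 1 := by omega
            simp [hy'] at hh
            omega
    have hgB : GermList B := ⟨hchain.suffix (rest.dropWhile_suffix _), hBhead⟩
    have hTlen : T.length ≤ rest.length := (rest.takeWhile_sublist _).length_le
    have hBlen : B.length ≤ rest.length := (rest.dropWhile_sublist _).length_le
    clear_value T B
    rw [toTree, ← hT, ← hB]
    have lenT : (T.map (· - 1)).length ≤ n := by simp only [length_map]; omega
    have lenB : B.length ≤ n := by omega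
    rw [ofTree]
    rw [ih _ lenT hgT, ih _ lenB hgB]
    have : (T.map (· - 1)).map (· + 1) = T := by
      rw [map_map]
      conv_rhs => rw [← List.map_id T]
      exact List.map_congr_left (fun x hx => by have := hTmem x hx; show x - 1 + 1 = x; omega)
    rw [this, hTB]


theorem getElem_idx_congr {l : List ℕ} {i j : ℕ} (h : i = j) (hi : i < l.length) :
    l[i]'hi = l[j]'(h ▸ hi) := by subst h; rfl

theorem count_bool (w : List Bool) : w.count true + w.count false = w.length := by
  induction w with
  | nil => rfl
  | cons b t ih => cases b <;> simp [count_cons] <;> omega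

/-- `U ↦ false`, `D ↦ true`. -/
def stepToBool : DyckStep → Bool
  | DyckStep.U => false
  | DyckStep.D => true

/-- `false ↦ U`, `true ↦ D`. -/
def boolToStep : Bool → DyckStep
  | false => DyckStep.U
  | true => DyckStep.D

theorem injective_stepToBool : Function.Injective stepToBool := by
  intro a b h
  cases a <;> cases b <;> first | rfl | simp [stepToBool] at h

theorem injective_boolToStep : Function.Injective boolToStep := by
  intro a b h
  cases a <;> cases b <;> first | rfl | simp [boolToStep] at h

/-- Equivalence between Mathlib Dyck words of semilength `k` and boolean Dyck words of
length `2k`. -/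
def wordEquiv (k : ℕ) :
    {p : DyckWord // p.semilength = k} ≃ {w : List Bool // w.length = 2 * k ∧ IsDyck w} where
  toFun := fun p => ⟨p.1.toList.map stepToBool, by
    have hcT : ∀ (l : List DyckStep), (l.map stepToBool).count true = l.count DyckStep.D :=
      fun l => count_map_of_injective l stepToBool injective_stepToBool DyckStep.D
    have hcF : ∀ (l : List DyckStep), (l.map stepToBool).count false = l.count DyckStep.U :=
      fun l => count_map_of_injective l stepToBool injective_stepToBool DyckStep.U
    refine ⟨?_, ?_, ?_⟩
    · rw [length_map, ← p.1.two_mul_semilength_eq_length, p.2]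
    · rw [hcT, hcF, p.1.count_U_eq_count_D]
    · intro q hq
      rw [List.prefix_iff_eq_take.mp hq, ← map_take, hcT, hcF]
      exact p.1.count_D_le_count_U _⟩
  invFun := fun w => ⟨⟨w.1.map boolToStep,
      by
        have hcU : (w.1.map boolToStep).count DyckStep.U = w.1.count false :=
          count_map_of_injective w.1 boolToStep injective_boolToStep false
        have hcD : (w.1.map boolToStep).count DyckStep.D = w.1.count true :=
          count_map_of_injective w.1 boolToStep injective_boolToStep true
        rw [hcU, hcD]
        exact w.2.2.1.symm,
      fun i => by
        have hcU : ((w.1.take i).map boolToStep).count DyckStep.U = (w.1.take i).count false :=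
          count_map_of_injective _ boolToStep injective_boolToStep false
        have hcD : ((w.1.take i).map boolToStep).count DyckStep.D = (w.1.take i).count true :=
          count_map_of_injective _ boolToStep injective_boolToStep true
        rw [← map_take, hcU, hcD]
        exact w.2.2.2 _ (take_prefix i w.1)⟩, by
      show (w.1.map boolToStep).count DyckStep.U = k
      have hcU : (w.1.map boolToStep).count DyckStep.U = w.1.count false :=
        count_map_of_injective w.1 boolToStep injective_boolToStep false
      have h1 := w.2.1
      have h2 := w.2.2.1
      have h3 := count_bool w.1
      omega⟩
  left_inv := fun p => Subtype.ext (DyckWord.ext (by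
    show (p.1.toList.map stepToBool).map boolToStep = p.1.toList
    rw [map_map]
    conv_rhs => rw [← List.map_id p.1.toList]
    exact List.map_congr_left (fun x _ => by cases x <;> rfl)))
  right_inv := fun w => Subtype.ext (by
    show (w.1.map boolToStep).map stepToBool = w.1
    rw [map_map]
    conv_rhs => rw [← List.map_id w.1]
    exact List.map_congr_left (fun x _ => by cases x <;> rfl))

/-- Equivalence between `k`-germs and germ lists of length `k`. -/
def germEquiv (k : ℕ) (hk : 1 ≤ k) :
    {a : Fin (k - 1) → ℕ // IsGerm k a} ≃ {l : List ℕ // l.length = k ∧ GermList l} where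
  toFun := fun a => ⟨List.ofFn (fun j : Fin k =>
      if h : 0 < j.val then a.1 ⟨k - 1 - j.val, by have := j.isLt; omega⟩ else 0), by
    refine ⟨by simp, ?_, ?_⟩
    · show List.IsChain _ _
      rw [List.isChain_ofFn]
      intro i hi
      simp only
      rw [dif_pos (show 0 < (⟨i + 1, hi⟩ : Fin k).val from Nat.succ_pos i)]
      rcases Nat.eq_zero_or_pos i with rfl | hi0
      · rw [dif_neg (by simp)]
        exact a.2.1 _ (by simp; omega)
      · rw [dif_pos hi0]
        have hj : (k - 1 - (i + 1)) + 1 < k - 1 := by omega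
        have h2 := a.2.2 ⟨k - 1 - (i + 1), by omega⟩ hj
        have heq : (⟨(k - 1 - (i + 1)) + 1, hj⟩ : Fin (k - 1)) =
            ⟨k - 1 - i, by omega⟩ := Fin.ext (by simp; omega)
        rw [heq] at h2
        exact h2
    · intro h hh
      obtain ⟨m, rfl⟩ : ∃ m, k = m + 1 := ⟨k - 1, by omega⟩
      rw [List.ofFn_succ, head?_cons, Option.mem_some_iff] at hh
      simp at hh
      omega⟩
  invFun := fun l => ⟨fun i : Fin (k - 1) =>
      l.1[k - 1 - i.val]'(by rw [l.2.1]; have := i.isLt; omega), by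
    have hlen := l.2.1
    have hchain := l.2.2.1
    have hne : l.1 ≠ [] := by intro e; rw [e] at hlen; simp at hlen; omega
    have h0 : l.1.head hne = 0 := l.2.2.2 _ (List.head?_eq_head hne)
    have hget : ∀ (i : ℕ) (hi : i + 1 < k),
        l.1[i + 1]'(by omega) ≤ l.1[i]'(by omega) + 1 := by
      intro i hi
      have := List.isChain_iff_getElem.mp hchain i (by rw [hlen]; omega)
      simpa [List.get_eq_getElem] using this
    constructor
    · intro j hj
      have hk2 : 2 ≤ k := by have := j.isLt; omega
      have h00 : l.1[0]'(by rw [hlen]; omega) = 0 := by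
        rw [List.getElem_zero]; exact h0
      have h1 := hget 0 (by omega)
      simp only [Nat.zero_add] at h1
      show l.1[k - 1 - j.val]'(by rw [hlen]; have := j.isLt; omega) ≤ 1
      have e : k - 1 - j.val = 1 := by omega
      simp only [e]
      omega
    · intro j hj
      show l.1[k - 1 - j.val]'(by rw [hlen]; have := j.isLt; omega) ≤
        l.1[k - 1 - (j.val + 1)]'(by rw [hlen]; omega) + 1
      have e : k - 1 - j.val = (k - 1 - (j.val + 1)) + 1 := by omega
      simp only [e]
      exact hget (k - 1 - (j.val + 1)) (by omega)⟩
  left_inv := fun a => Subtype.ext (by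
    funext i
    simp only [List.getElem_ofFn]
    rw [dif_pos (show 0 < k - 1 - i.val by have := i.isLt; omega)]
    exact congrArg a.1 (Fin.ext (show k - 1 - (k - 1 - i.val) = i.val by have := i.isLt; omega)))
  right_inv := fun l => Subtype.ext (by
    refine List.ext_getElem (by simp [l.2.1]) ?_
    intro j h1 h2
    have hlen := l.2.1
    have hne : l.1 ≠ [] := by intro e; rw [e] at hlen; simp at hlen; omega
    have h0 : l.1.head hne = 0 := l.2.2.2 _ (List.head?_eq_head hne)
    simp only [List.getElem_ofFn]
    split
    · have e : k - 1 - (k - 1 - j) = j := by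
        simp only [List.length_ofFn] at h1
        omega
      exact getElem_idx_congr e (by rw [hlen]; simp only [List.length_ofFn] at h1; omega)
    · rename_i hfalse
      have hj0 : j = 0 := Nat.eq_zero_of_not_pos hfalse
      subst hj0
      rw [List.getElem_zero]
      exact h0.symm)

end GermDyckAux

/-- There is a bijection between `k`-germs and Dyck words of length `2k`. -/
theorem germs_equiv_dyck_words (k : ℕ) (hk : 1 ≤ k) :
    Nonempty ({a : Fin (k - 1) → ℕ // IsGerm k a} ≃
      {w : List Bool // w.length = 2 * k ∧ IsDyck w}) := by
  let e2 : {l : List ℕ // l.length = k ∧ GermDyckAux.GermList l} ≃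
      {t : Tree Unit // t.numNodes = k} :=
    { toFun := fun l => ⟨GermDyckAux.toTree l.1, by
        rw [GermDyckAux.numNodes_toTree]; exact l.2.1⟩
      invFun := fun t => ⟨GermDyckAux.ofTree t.1,
        by rw [GermDyckAux.length_ofTree]; exact t.2, GermDyckAux.germList_ofTree t.1⟩
      left_inv := fun l => Subtype.ext
        (GermDyckAux.ofTree_toTree l.1.length l.1 le_rfl l.2.2)
      right_inv := fun t => Subtype.ext (GermDyckAux.toTree_ofTree t.1) }
  let e3 : {t : Tree Unit // t.numNodes = k} ≃ {p : DyckWord // p.semilength = k} :=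
    (Equiv.subtypeEquivRight (fun t => BinaryTree.mem_treesOfNumNodesEq.symm)).trans
      (DyckWord.equivTreesOfNumNodesEq k).symm
  exact ⟨((GermDyckAux.germEquiv k hk).trans e2).trans
    (e3.trans (GermDyckAux.wordEquiv k))⟩
end

section
/- If G is a graph that is a disjoint union of cycles C_1, …, C_m (a 2-factor of a host graph H) and F_6 is a 6-cycle of H whose edge set meets the edge sets of exactly three distinct cycles C_a, C_b, C_c in one edge each (alternating on F_6 with three edges outside the 2-factor), then the symmetric difference of the edge set of the 2-factor with the edge set of F_6 is again a 2-factor of H, in which the three cycles C_a, C_b, C_c are merged into a single cycle. -/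
lemma reach_of_odd_comp {V : Type*} [Fintype V] (G : SimpleGraph V) (x y : V)
    (hx : Odd (G.neighborSet x).ncard)
    (h : ∀ a, G.Reachable x a → Odd (G.neighborSet a).ncard → a = x ∨ a = y) :
    G.Reachable x y := by
  classical
  by_contra hxy
  set c := G.connectedComponentMk x with hc
  let Gc : SimpleGraph V :=
    { Adj := fun a b => G.Adj a b ∧ G.connectedComponentMk a = c
      symm := by
        constructor
        rintro a b ⟨hab, ha⟩
        exact ⟨hab.symm, (SimpleGraph.ConnectedComponent.sound hab.symm.reachable).trans ha⟩
      loopless := ⟨fun a h' => G.loopless.irrefl a h'.1⟩ }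
  have hGcAdj : ∀ a b, Gc.Adj a b ↔ G.Adj a b ∧ G.connectedComponentMk a = c :=
    fun a b => Iff.rfl
  have hdeg : ∀ a, (Gc.neighborSet a).ncard
      = if G.connectedComponentMk a = c then (G.neighborSet a).ncard else 0 := by
    intro a
    by_cases ha : G.connectedComponentMk a = c
    · rw [if_pos ha]
      congr 1
      ext b
      simp only [SimpleGraph.mem_neighborSet, hGcAdj]
      exact and_iff_left ha
    · rw [if_neg ha]
      have he : Gc.neighborSet a = ∅ := by
        ext b
        simp only [SimpleGraph.mem_neighborSet, hGcAdj, Set.mem_empty_iff_false, iff_false]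
        tauto
      simp [he]
  have hdeg' : ∀ a, Gc.degree a = (Gc.neighborSet a).ncard := by
    intro a
    rw [Set.ncard_eq_toFinset_card']
    rfl
  have heven := Gc.even_card_odd_degree_vertices
  have hsing : (Finset.univ.filter fun a => Odd (Gc.degree a)) = {x} := by
    ext a
    simp only [Finset.mem_filter, Finset.mem_univ, true_and, Finset.mem_singleton]
    constructor
    · intro hodd
      rw [hdeg' a, hdeg a] at hodd
      by_cases ha : G.connectedComponentMk a = c
      · rw [if_pos ha] at hodd
        have hreach : G.Reachable x a :=
          (SimpleGraph.ConnectedComponent.exact (ha.trans hc)).symm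
        rcases h a hreach hodd with h1 | h1
        · exact h1
        · exact absurd (h1 ▸ hreach) hxy
      · rw [if_neg ha] at hodd
        norm_num at hodd
    · rintro rfl
      rw [hdeg' _, hdeg _, if_pos hc.symm]
      exact hx
  rw [hsing] at heven
  norm_num at heven

/-- Flipping-cycle merging step: let `G ≤ H` be a 2-factor of a finite graph `H` (every
vertex has exactly two `G`-neighbors, so `G` is a disjoint union of cycles), and let
`v 0, v 1, …, v 5` be a 6-cycle `F₆` of `H` whose edges alternate between edges of `G`
and non-edges of `G`, the three `G`-edges lying in three pairwise distinct components
(cycles) of `G`. Then the graph whose edge set is the symmetric difference of the edge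
set of `G` with the edge set of `F₆` is again a 2-factor of `H`, in which the three
affected cycles are merged into a single cycle (their vertices become mutually
reachable). -/
theorem two_factor_flip_six_cycle {V : Type*} [Fintype V] (H G : SimpleGraph V)
    (hGH : G ≤ H)
    (h2 : ∀ x : V, (G.neighborSet x).ncard = 2)
    (v : Fin 6 → V) (hinj : Function.Injective v)
    (hH : ∀ i : Fin 6, H.Adj (v i) (v (i + 1)))
    (hin : ∀ i : Fin 6, i.val % 2 = 0 → G.Adj (v i) (v (i + 1)))
    (hout : ∀ i : Fin 6, i.val % 2 = 1 → ¬ G.Adj (v i) (v (i + 1)))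
    (hcomp : G.connectedComponentMk (v 0) ≠ G.connectedComponentMk (v 2) ∧
      G.connectedComponentMk (v 2) ≠ G.connectedComponentMk (v 4) ∧
      G.connectedComponentMk (v 0) ≠ G.connectedComponentMk (v 4)) :
    ∀ G' : SimpleGraph V,
      G' = SimpleGraph.fromEdgeSet
        (symmDiff G.edgeSet {e : Sym2 V | ∃ i : Fin 6, e = s(v i, v (i + 1))}) →
      G' ≤ H ∧ (∀ x : V, (G'.neighborSet x).ncard = 2) ∧
        G'.Reachable (v 0) (v 2) ∧ G'.Reachable (v 2) (v 4) := by
  classical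
  intro G' hG'
  set F : Set (Sym2 V) := {e : Sym2 V | ∃ i : Fin 6, e = s(v i, v (i + 1))} with hF
  -- basic Fin 6 facts
  have d1 : ∀ i : Fin 6, i + 5 + 1 = i := by decide
  have d2 : ∀ i j : Fin 6, i = j + 1 → j = i + 5 := by decide
  have d3 : ∀ i : Fin 6, i ≠ i + 1 := by decide
  have d4 : ∀ i : Fin 6, i + 5 ≠ i + 1 := by decide
  have d5 : ∀ i : Fin 6, i.val % 2 = 0 → (i + 5).val % 2 = 1 := by decide
  have d6 : ∀ i : Fin 6, i.val % 2 = 1 → (i + 5).val % 2 = 0 := by decide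
  -- adjacency characterization for G'
  have hadj : ∀ a b : V,
      G'.Adj a b ↔ (G.Adj a b ∧ s(a,b) ∉ F) ∨ (s(a,b) ∈ F ∧ ¬ G.Adj a b) := by
    intro a b
    rw [hG', SimpleGraph.fromEdgeSet_adj, Set.mem_symmDiff]
    simp only [SimpleGraph.mem_edgeSet]
    constructor
    · rintro ⟨h | h, -⟩
      · exact Or.inl h
      · exact Or.inr h
    · rintro (⟨h1, h2'⟩ | ⟨h1, h2'⟩)
      · exact ⟨Or.inl ⟨h1, h2'⟩, h1.ne⟩
      · refine ⟨Or.inr ⟨h1, h2'⟩, ?_⟩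
        obtain ⟨i, hi⟩ := h1
        rcases Sym2.eq_iff.mp hi with ⟨ha, hb⟩ | ⟨ha, hb⟩
        · intro h
          subst ha; subst hb
          exact d3 i (hinj h)
        · intro h
          subst ha; subst hb
          exact d3 i (hinj h).symm
  -- incidence of F at each vertex of the 6-cycle
  have hFinc : ∀ (i : Fin 6) (u : V), s(v i, u) ∈ F ↔ (u = v (i+1) ∨ u = v (i+5)) := by
    intro i u
    constructor
    · rintro ⟨j, hj⟩
      rcases Sym2.eq_iff.mp hj with ⟨h1, h2'⟩ | ⟨h1, h2'⟩
      · left; rw [h2', hinj h1]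
      · right; rw [h2', d2 i j (hinj h1)]
    · rintro (rfl | rfl)
      · exact ⟨i, rfl⟩
      · exact ⟨i + 5, by rw [d1 i]; exact Sym2.eq_swap⟩
  -- vertices off the 6-cycle are incident to no F-edge
  have hxrange : ∀ x : V, x ∉ Set.range v → ∀ u, s(x, u) ∉ F := by
    rintro x hx u ⟨j, hj⟩
    rcases Sym2.eq_iff.mp hj with ⟨h1, -⟩ | ⟨h1, -⟩
    · exact hx ⟨j, h1.symm⟩
    · exact hx ⟨j + 1, h1.symm⟩
  -- deleted edges
  set D : Set (Sym2 V) := {e : Sym2 V | ∃ i : Fin 6, i.val % 2 = 0 ∧ e = s(v i, v (i + 1))}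
    with hDdef
  set G₀ : SimpleGraph V := G.deleteEdges D with hG₀
  have hDF : D ⊆ F := by rintro e ⟨j, -, hj⟩; exact ⟨j, hj⟩
  have hD : ∀ i : Fin 6, ∃ w, G.Adj (v i) w ∧ ∀ u, (s(v i, u) ∈ D ↔ u = w) := by
    intro i
    rcases Nat.mod_two_eq_zero_or_one i.val with hi | hi
    · refine ⟨v (i+1), hin i hi, fun u => ⟨?_, ?_⟩⟩
      · rintro ⟨j, hj0, hj⟩
        rcases Sym2.eq_iff.mp hj with ⟨h1, h2'⟩ | ⟨h1, h2'⟩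
        · rw [h2', hinj h1]
        · exfalso
          rw [d2 i j (hinj h1)] at hj0
          have := d5 i hi
          omega
      · rintro rfl; exact ⟨i, hi, rfl⟩
    · refine ⟨v (i+5), ?_, fun u => ⟨?_, ?_⟩⟩
      · have h5 := hin (i+5) (d6 i hi)
        rw [d1 i] at h5
        exact h5.symm
      · rintro ⟨j, hj0, hj⟩
        rcases Sym2.eq_iff.mp hj with ⟨h1, h2'⟩ | ⟨h1, h2'⟩
        · exfalso; rw [hinj h1] at hi; omega
        · rw [h2', d2 i j (hinj h1)]
      · rintro rfl
        exact ⟨i + 5, d6 i hi, by rw [d1 i]; exact Sym2.eq_swap⟩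
  -- degrees in G₀
  have hG₀v : ∀ i : Fin 6, Odd ((G₀.neighborSet (v i)).ncard) := by
    intro i
    obtain ⟨w, hw, hinc⟩ := hD i
    have hs : G₀.neighborSet (v i) = G.neighborSet (v i) \ {w} := by
      ext u
      simp only [hG₀, SimpleGraph.mem_neighborSet, SimpleGraph.deleteEdges_adj,
        Set.mem_diff, Set.mem_singleton_iff]
      rw [hinc u]
    have hwmem : w ∈ G.neighborSet (v i) := hw
    rw [hs, Set.ncard_diff_singleton_of_mem hwmem, h2]
    norm_num
  have hG₀x : ∀ x : V, x ∉ Set.range v → (G₀.neighborSet x).ncard = 2 := by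
    intro x hx
    have hs : G₀.neighborSet x = G.neighborSet x := by
      ext u
      simp only [hG₀, SimpleGraph.mem_neighborSet, SimpleGraph.deleteEdges_adj]
      exact and_iff_left fun hmem => hxrange x hx u (hDF hmem)
    rw [hs, h2]
  have hG₀G : G₀ ≤ G := SimpleGraph.deleteEdges_le D
  have hG₀G' : G₀ ≤ G' := by
    intro a b hab
    rw [hG₀, SimpleGraph.deleteEdges_adj] at hab
    rw [hadj]
    left
    refine ⟨hab.1, fun hFm => hab.2 ?_⟩
    obtain ⟨j, hj⟩ := hFm
    rcases Nat.mod_two_eq_zero_or_one j.val with hj0 | hj1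
    · exact ⟨j, hj0, hj⟩
    · exfalso
      apply hout j hj1
      have hm : s(a, b) ∈ G.edgeSet := hab.1
      rw [hj] at hm
      exact hm
  -- reachability v0 ~ v1 and v2 ~ v3 within G₀
  have key : ∀ i₀ i₁ : Fin 6,
      (∀ i : Fin 6, G₀.Reachable (v i₀) (v i) → i = i₀ ∨ i = i₁) →
      G₀.Reachable (v i₀) (v i₁) := by
    intro i₀ i₁ hcases
    apply reach_of_odd_comp G₀ (v i₀) (v i₁) (hG₀v i₀)
    intro a hra hodd
    have ha : a ∈ Set.range v := by
      by_contra hc'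
      rw [hG₀x a hc'] at hodd
      revert hodd
      decide
    obtain ⟨i, rfl⟩ := ha
    rcases hcases i hra with rfl | rfl
    · exact Or.inl rfl
    · exact Or.inr rfl
  have comp02 := hcomp.1
  have comp24 := hcomp.2.1
  have comp04 := hcomp.2.2
  have e01 : G.Adj (v 0) (v 1) := by
    have := hin 0 (by decide)
    rwa [show ((0:Fin 6) + 1) = 1 by decide] at this
  have e23 : G.Adj (v 2) (v 3) := by
    have := hin 2 (by decide)
    rwa [show ((2:Fin 6) + 1) = 3 by decide] at this
  have e45 : G.Adj (v 4) (v 5) := by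
    have := hin 4 (by decide)
    rwa [show ((4:Fin 6) + 1) = 5 by decide] at this
  have hreach01 : G₀.Reachable (v 0) (v 1) := by
    apply key 0 1
    intro i hra
    have hGr : G.Reachable (v 0) (v i) := hra.mono hG₀G
    fin_cases i
    · exact Or.inl rfl
    · exact Or.inr rfl
    · exact absurd (SimpleGraph.ConnectedComponent.sound hGr) comp02
    · exact absurd (SimpleGraph.ConnectedComponent.sound
        (hGr.trans e23.symm.reachable)) comp02
    · exact absurd (SimpleGraph.ConnectedComponent.sound hGr) comp04
    · exact absurd (SimpleGraph.ConnectedComponent.sound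
        (hGr.trans e45.symm.reachable)) comp04
  have hreach23 : G₀.Reachable (v 2) (v 3) := by
    apply key 2 3
    intro i hra
    have hGr : G.Reachable (v 2) (v i) := hra.mono hG₀G
    fin_cases i
    · exact absurd (SimpleGraph.ConnectedComponent.sound hGr.symm) comp02
    · exact absurd (SimpleGraph.ConnectedComponent.sound
        ((hGr.trans e01.symm.reachable).symm)) comp02
    · exact Or.inl rfl
    · exact Or.inr rfl
    · exact absurd (SimpleGraph.ConnectedComponent.sound hGr) comp24
    · exact absurd (SimpleGraph.ConnectedComponent.sound
        (hGr.trans e45.symm.reachable)) comp24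
  have hadj12 : G'.Adj (v 1) (v 2) := by
    rw [hadj]
    right
    constructor
    · exact ⟨1, by rw [show ((1:Fin 6) + 1) = 2 by decide]⟩
    · have := hout 1 (by decide)
      rwa [show ((1:Fin 6) + 1) = 2 by decide] at this
  have hadj34 : G'.Adj (v 3) (v 4) := by
    rw [hadj]
    right
    constructor
    · exact ⟨3, by rw [show ((3:Fin 6) + 1) = 4 by decide]⟩
    · have := hout 3 (by decide)
      rwa [show ((3:Fin 6) + 1) = 4 by decide] at this
  -- the r/a data at each cycle vertex
  have hF6 : ∀ i : Fin 6, ∃ r a, G.Adj (v i) r ∧ ¬ G.Adj (v i) a ∧ a ≠ r ∧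
      ∀ u, (s(v i, u) ∈ F ↔ u = r ∨ u = a) := by
    intro i
    rcases Nat.mod_two_eq_zero_or_one i.val with hi | hi
    · refine ⟨v (i+1), v (i+5), hin i hi, ?_, ?_, fun u => hFinc i u⟩
      · intro hadj'
        have h5 := hout (i+5) (d5 i hi)
        rw [d1 i] at h5
        exact h5 hadj'.symm
      · exact fun h => d4 i (hinj h)
    · refine ⟨v (i+5), v (i+1), ?_, hout i hi, ?_, fun u => (hFinc i u).trans or_comm⟩
      · have h5 := hin (i+5) (d6 i hi)
        rw [d1 i] at h5
        exact h5.symm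
      · exact fun h => d4 i (hinj h).symm
  refine ⟨?_, ?_, ?_, ?_⟩
  · -- G' ≤ H
    intro a b hab
    rw [hadj] at hab
    rcases hab with ⟨h1, -⟩ | ⟨⟨j, hj⟩, -⟩
    · exact hGH h1
    · rcases Sym2.eq_iff.mp hj with ⟨ha, hb⟩ | ⟨ha, hb⟩
      · rw [ha, hb]; exact hH j
      · rw [ha, hb]; exact (hH j).symm
  · -- degrees
    intro x
    by_cases hx : x ∈ Set.range v
    · obtain ⟨i, rfl⟩ := hx
      obtain ⟨r, a, hr, hna, hne, hinc⟩ := hF6 i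
      have hset : G'.neighborSet (v i) = insert a (G.neighborSet (v i) \ {r}) := by
        ext u
        simp only [SimpleGraph.mem_neighborSet, Set.mem_insert_iff, Set.mem_diff,
          Set.mem_singleton_iff]
        rw [hadj]
        constructor
        · rintro (⟨hu, hnf⟩ | ⟨hf, hnu⟩)
          · exact Or.inr ⟨hu, fun h => hnf ((hinc u).mpr (Or.inl h))⟩
          · rcases (hinc u).mp hf with rfl | rfl
            · exact absurd hr hnu
            · exact Or.inl rfl
        · rintro (rfl | ⟨hu, hur⟩)
          · exact Or.inr ⟨(hinc u).mpr (Or.inr rfl), hna⟩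
          · refine Or.inl ⟨hu, fun hf => ?_⟩
            rcases (hinc u).mp hf with rfl | rfl
            · exact hur rfl
            · exact hna hu
      have hnotmem : a ∉ G.neighborSet (v i) \ {r} := fun h => hna h.1
      have hrmem : r ∈ G.neighborSet (v i) := hr
      rw [hset, Set.ncard_insert_of_notMem hnotmem,
        Set.ncard_diff_singleton_of_mem hrmem, h2]
    · have hs : G'.neighborSet x = G.neighborSet x := by
        ext u
        simp only [SimpleGraph.mem_neighborSet]
        rw [hadj]
        have hnf := hxrange x hx u
        tauto
      rw [hs, h2]
  · exact (hreach01.mono hG₀G').trans hadj12.reachable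
  · exact (hreach23.mono hG₀G').trans hadj34.reachable
end
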